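/- Suppose M is uniformly continuous. Then the following are equivalent: (i) M is non-degenerate; (ii) M(G) > 0 for all M ∈ Ẽ(M); (iii) E_⊥(M) is empty; (iv) Ẽ(M) = E(M); (v) M(G) = 1 for all M ∈ Ẽ(M). -/

import Mathlib

open MeasureTheory Filter Topology
open scoped ENNReal NNReal Classical

noncomputable section

/-- A countable Markov system `(K_{i(e)}, w_e, p_e)_{e ∈ E}` on a metric space `K`:
a partition `(K_j)_{j ∈ N}` of `K` into nonempty Borel sets, source and target maps
`i, t : E → N` (`i` surjective), and for each `e ∈ E` Borel maps `w_e` and probability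
functions `p_e` (extended by zero outside `K_{i(e)}`) with
`∑_{e, i(e)=j} p_e(y) = 1` for `y ∈ K_j`. -/
structure MarkovSystem (K : Type*) [MetricSpace K] [MeasurableSpace K]
    (N : Type*) (E : Type*) where
  Kset : N → Set K
  Kset_nonempty : ∀ j, (Kset j).Nonempty
  Kset_measurable : ∀ j, MeasurableSet (Kset j)
  Kset_disjoint : Pairwise (Function.onFun Disjoint Kset)
  Kset_cover : (⋃ j, Kset j) = Set.univ
  i : E → N
  t : E → N
  i_surj : Function.Surjective i
  w : E → K → K
  p : E → K → ℝ
  w_measurable : ∀ e, Measurable (w e)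
  p_measurable : ∀ e, Measurable (p e)
  p_nonneg : ∀ e x, 0 ≤ p e x
  p_le_one : ∀ e x, p e x ≤ 1
  p_zero_outside : ∀ e x, x ∉ Kset (i e) → p e x = 0
  w_mapsTo : ∀ e, Set.MapsTo (w e) (Kset (i e)) (Kset (t e))
  p_pos_somewhere : ∀ e, ∃ x ∈ Kset (i e), 0 < p e x
  p_tsum_one : ∀ j, ∀ x ∈ Kset j, (∑' e : {e : E // i e = j}, p e.val x) = 1

/-- `Ē = E ∪ {∞}` (one-point compactification); with `E` countable its Borel σ-algebra
consists of all subsets. -/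
instance optionMeasurableSpace (E : Type*) : MeasurableSpace (Option E) := ⊤

/-- The code space `Σ̄ = Ē^ℤ`, carrying the product σ-algebra. -/
abbrev CodeSpace (E : Type*) : Type _ := ℤ → Option E

/-- The left shift `S` on the code space, `(Sσ)_{k-1} = σ_k`. -/
def shiftMap (E : Type*) : CodeSpace E → CodeSpace E := fun σ k => σ (k + 1)

/-- The cylinder set `_m[es₀, …, es_{n}] = {σ : σ_{m+k} = es_k}`. -/
def cylSetL {E : Type*} (m : ℤ) (es : List (Option E)) : Set (CodeSpace E) :=
  {σ | ∀ (k : ℕ) (h : k < es.length), σ (m + (k : ℤ)) = es.get ⟨k, h⟩}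

/-- The σ-algebra `𝓕` generated by the cylinder sets `_m[e_m, …, e_0]`, `m ≤ 0`. -/
def pastAlgebra (E : Type*) : MeasurableSpace (CodeSpace E) :=
  MeasurableSpace.generateFrom
    {A | ∃ es : List (Option E), es ≠ [] ∧ A = cylSetL (1 - (es.length : ℤ)) es}

/-- The conditional entropy `h_S(Λ) = H_Λ((_1[e])_{e ∈ Ē} | 𝓕)`. -/
def entropyS {E : Type*} (Λ : Measure (CodeSpace E)) : ℝ≥0∞ :=
  ∑' eo : Option E,
    ∫⁻ σ, ENNReal.ofReal
        (Real.negMulLog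
          ((Λ[Set.indicator {τ : CodeSpace E | τ 1 = eo} (fun _ => (1 : ℝ)) | pastAlgebra E]) σ)) ∂Λ

namespace MarkovSystem

variable {K : Type*} [MetricSpace K] [MeasurableSpace K] {N E : Type*}

/-- The Markov operator `Uf = ∑_e p_e · (f ∘ w_e)` acting on nonnegative Borel functions. -/
def markovOp (M : MarkovSystem K N E) (f : K → ℝ≥0∞) : K → ℝ≥0∞ :=
  fun x => ∑' e : E, ENNReal.ofReal (M.p e x) * f (M.w e x)

/-- The adjoint operator `U*` acting on measures, `(U*ν)(B) = ∫ U(1_B) dν`. -/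
def adjOp (M : MarkovSystem K N E) (ν : Measure K) : Measure K :=
  Measure.sum fun e : E =>
    Measure.map (M.w e) (ν.withDensity fun x => ENNReal.ofReal (M.p e x))

/-- `μ ∈ P(M)`: `μ` is an invariant Borel probability measure, `U*μ = μ`. -/
def IsInvariantMeasure (M : MarkovSystem K N E) (μ : Measure K) : Prop :=
  IsProbabilityMeasure μ ∧ M.adjOp μ = μ

/-- The path space `Σ_G`: all coordinates lie in `E` and `i(σ_{n+1}) = t(σ_n)`. -/
def pathSpace (M : MarkovSystem K N E) : Set (CodeSpace E) :=
  {σ | ∀ n : ℤ, ∃ e e' : E, σ n = some e ∧ σ (n + 1) = some e' ∧ M.i e' = M.t e}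

/-- `T_j = {σ ∈ Σ_G : t(σ_0) = j}`. -/
def Tset (M : MarkovSystem K N E) (j : N) : Set (CodeSpace E) :=
  {σ | σ ∈ M.pathSpace ∧ ∃ e : E, σ 0 = some e ∧ M.t e = j}

/-- `w` extended to `Ē`, with `w_∞ = id`. -/
def wext (M : MarkovSystem K N E) : Option E → K → K := fun o => o.elim id M.w

/-- `p` extended to `Ē`, with `p_∞ = 0`. -/
def pext (M : MarkovSystem K N E) : Option E → K → ℝ := fun o => o.elim (fun _ => 0) M.p

/-- `i` extended to `Ē`, with `i(∞) = j₀`. -/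
def iext (M : MarkovSystem K N E) (j0 : N) : Option E → N := fun o => o.elim j0 M.i

/-- `t` extended to `Ē`, with `t(∞) = j₀`. -/
def text (M : MarkovSystem K N E) (j0 : N) : Option E → N := fun o => o.elim j0 M.t

/-- `iterW M σ n y = w_{σ_0} ∘ w_{σ_{-1}} ∘ ⋯ ∘ w_{σ_{-n}} (y)`. -/
def iterW (M : MarkovSystem K N E) (σ : CodeSpace E) : ℕ → K → K
  | 0, y => M.wext (σ 0) y
  | n + 1, y => M.iterW σ n (M.wext (σ (-(n + 1 : ℤ))) y)

/-- `orbit M j0 xp σ n = w_{σ_0} ∘ ⋯ ∘ w_{σ_{-n}} (x_{i(σ_{-n})})`. -/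
def orbit (M : MarkovSystem K N E) (j0 : N) (xp : N → K) (σ : CodeSpace E) (n : ℕ) : K :=
  M.iterW σ n (xp (M.iext j0 (σ (-(n : ℤ)))))

/-- `D`: the set of `σ ∈ Σ_G` for which `lim_{m → -∞} w_{σ_0} ∘ ⋯ ∘ w_{σ_m}(x_{i(σ_m)})` exists. -/
def codeDomain (M : MarkovSystem K N E) (j0 : N) (xp : N → K) : Set (CodeSpace E) :=
  {σ | σ ∈ M.pathSpace ∧ ∃ l : K, Tendsto (fun n : ℕ => M.orbit j0 xp σ n) atTop (𝓝 l)}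

/-- The coding map `F`: the above limit on `D`, and `x_{t(σ_0)}` elsewhere. -/
def code (M : MarkovSystem K N E) (j0 : N) (xp : N → K) (σ : CodeSpace E) : K :=
  if h : σ ∈ M.codeDomain j0 xp then h.2.choose else xp (M.text j0 (σ 0))

/-- `Λ ∈ E(M)`: `Λ` is a shift-invariant Borel probability measure with `Λ(D) = 1` and
`E_Λ(1_{_1[e]} | 𝓕) = p_e ∘ F` `Λ`-a.e. for every `e ∈ E` (an equilibrium state). -/
def IsEquilibrium (M : MarkovSystem K N E) (j0 : N) (xp : N → K)
    (Λ : Measure (CodeSpace E)) : Prop :=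
  IsProbabilityMeasure Λ ∧ Measure.map (shiftMap E) Λ = Λ ∧
    Λ (M.codeDomain j0 xp) = 1 ∧
    ∀ e : E,
      (Λ[Set.indicator {σ : CodeSpace E | σ 1 = some e} (fun _ => (1 : ℝ)) | pastAlgebra E])
        =ᵐ[Λ] fun σ => M.p e (M.code j0 xp σ)

/-- `pbar` is the family of continuous extensions `p̄_e` of `p_e|_{K_{i(e)}}` to the closure
of `K_{i(e)}`, extended further by zero on `K`. -/
def IsUCExtensionP (M : MarkovSystem K N E) (pbar : E → K → ℝ) : Prop :=
  ∀ e : E, ContinuousOn (pbar e) (closure (M.Kset (M.i e))) ∧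
    (∀ x ∈ M.Kset (M.i e), pbar e x = M.p e x) ∧
    (∀ x, x ∉ closure (M.Kset (M.i e)) → pbar e x = 0)

/-- `wb` is a family of continuous extensions `w̄_e` of `w_e|_{K_{i(e)}}` to the closure
of `K_{i(e)}`. -/
def IsUCExtensionW (M : MarkovSystem K N E) (wb : E → K → K) : Prop :=
  ∀ e : E, ContinuousOn (wb e) (closure (M.Kset (M.i e))) ∧
    (∀ x ∈ M.Kset (M.i e), wb e x = M.w e x)

/-- The Markov system is uniformly continuous: each `w_e|_{K_{i(e)}}` and `p_e|_{K_{i(e)}}`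
is uniformly continuous. -/
def IsUniformlyContinuous (M : MarkovSystem K N E) : Prop :=
  ∀ e : E, UniformContinuousOn (M.w e) (M.Kset (M.i e)) ∧
    UniformContinuousOn (M.p e) (M.Kset (M.i e))

/-- `∂p_e = p̄_e · 1_{cl(K_{i(e)}) \ K_{i(e)}}`. -/
def dp (M : MarkovSystem K N E) (pbar : E → K → ℝ) (e : E) : K → ℝ :=
  Set.indicator (closure (M.Kset (M.i e)) \ M.Kset (M.i e)) (pbar e)

/-- `Λ ∈ Ẽ(M)` (asymptotic state): shift-invariant probability with `Λ(D) = 1` and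
`E_Λ(1_{_1[e]} | 𝓕) = (p̄_e ∘ F)·1_{T_{i(e)}}` `Λ`-a.e. for every `e`. -/
def IsAsymptotic (M : MarkovSystem K N E) (j0 : N) (xp : N → K) (pbar : E → K → ℝ)
    (Λ : Measure (CodeSpace E)) : Prop :=
  IsProbabilityMeasure Λ ∧ Measure.map (shiftMap E) Λ = Λ ∧
    Λ (M.codeDomain j0 xp) = 1 ∧
    ∀ e : E,
      (Λ[Set.indicator {σ : CodeSpace E | σ 1 = some e} (fun _ => (1 : ℝ)) | pastAlgebra E])
        =ᵐ[Λ] Set.indicator (M.Tset (M.i e)) (fun σ => pbar e (M.code j0 xp σ))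

/-- `Λ ∈ E_⊥(M)`: shift-invariant probability with `Λ(D) = 1` and
`E_Λ(1_{_1[e]} | 𝓕) = (∂p_e ∘ F)·1_{T_{i(e)}}` `Λ`-a.e. for every `e`. -/
def IsPerp (M : MarkovSystem K N E) (j0 : N) (xp : N → K) (pbar : E → K → ℝ)
    (Λ : Measure (CodeSpace E)) : Prop :=
  IsProbabilityMeasure Λ ∧ Measure.map (shiftMap E) Λ = Λ ∧
    Λ (M.codeDomain j0 xp) = 1 ∧
    ∀ e : E,
      (Λ[Set.indicator {σ : CodeSpace E | σ 1 = some e} (fun _ => (1 : ℝ)) | pastAlgebra E])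
        =ᵐ[Λ] Set.indicator (M.Tset (M.i e)) (fun σ => M.dp pbar e (M.code j0 xp σ))

/-- `G = ⋃_{k ≥ 0} ⋃_{j ∈ N} S^{-k}(F^{-1}(K_j) ∩ T_j)`. -/
def Gset (M : MarkovSystem K N E) (j0 : N) (xp : N → K) : Set (CodeSpace E) :=
  ⋃ (k : ℕ) (j : N), (shiftMap E)^[k] ⁻¹' ((M.code j0 xp) ⁻¹' (M.Kset j) ∩ M.Tset j)

/-- `M` is non-degenerate: for every asymptotic state `Λ` there is `i ∈ N` with
`Λ(T_i ∩ F^{-1}(K_i)) > 0`. -/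
def IsNonDegenerate (M : MarkovSystem K N E) (j0 : N) (xp : N → K) (pbar : E → K → ℝ) : Prop :=
  ∀ Λ : Measure (CodeSpace E), M.IsAsymptotic j0 xp pbar Λ →
    ∃ i : N, 0 < Λ (M.Tset i ∩ (M.code j0 xp) ⁻¹' (M.Kset i))

/-- `M` is consistent: `F(Λ) ∈ P(M)` for every asymptotic state `Λ`. -/
def IsConsistent (M : MarkovSystem K N E) (j0 : N) (xp : N → K) (pbar : E → K → ℝ) : Prop :=
  ∀ Λ : Measure (CodeSpace E), M.IsAsymptotic j0 xp pbar Λ →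
    M.IsInvariantMeasure (Measure.map (M.code j0 xp) Λ)

/-- `Rf = ∑_e ∂p_e · (f ∘ w̄_e)`. -/
def Rop (M : MarkovSystem K N E) (pbar : E → K → ℝ) (wb : E → K → K)
    (f : K → ℝ≥0∞) : K → ℝ≥0∞ :=
  fun x => ∑' e : E, ENNReal.ofReal (M.dp pbar e x) * f (wb e x)

/-- `Ω = ⋂_{n ≥ 1} {R^n 1 ≥ 1}`. -/
def OmegaSet (M : MarkovSystem K N E) (pbar : E → K → ℝ) (wb : E → K → K) : Set K :=
  ⋂ n : ℕ, {x : K | 1 ≤ (M.Rop pbar wb)^[n + 1] (fun _ => 1) x}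

/-- `ξ_j = ∑_{e, i(e) = j} sup_{x ∈ K_j} p_e(x)`. -/
def xi (M : MarkovSystem K N E) (j : N) : ℝ≥0∞ :=
  ∑' e : {e : E // M.i e = j}, ⨆ x ∈ M.Kset j, ENNReal.ofReal (M.p e.val x)

/-- `M` has a dominating Markov chain: `ξ_j < ∞` for all `j ∈ N`. -/
def HasDominatingChain (M : MarkovSystem K N E) : Prop := ∀ j : N, M.xi j ≠ ⊤

/-- `ξ_j · q_{j j'} = ∑_{e, i(e) = j, t(e) = j'} sup_{x ∈ K_j} p_e(x)`. -/
def xiq (M : MarkovSystem K N E) (j j' : N) : ℝ≥0∞ :=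
  ∑' e : {e : E // M.i e = j ∧ M.t e = j'}, ⨆ x ∈ M.Kset j, ENNReal.ofReal (M.p e.val x)

/-- `c = ∑_{j'} sup_j ξ_j q_{j j'}`. -/
def cConst (M : MarkovSystem K N E) : ℝ≥0∞ := ∑' j' : N, ⨆ j : N, M.xiq j j'

/-- `α^{x_0}_n({j}) = (1/n) ∑_{k=1}^n ((U*)^k δ_{x_0})(K_j)`. -/
def alphaMeas (M : MarkovSystem K N E) (x0 : K) (n : ℕ) (j : N) : ℝ≥0∞ :=
  (n : ℝ≥0∞)⁻¹ * ∑ k ∈ Finset.range n, (M.adjOp^[k + 1] (Measure.dirac x0)) (M.Kset j)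

/-- Condition (T) at `x_0`: the sequence `(α^{x_0}_n)_n` is uniformly tight. -/
def ConditionT (M : MarkovSystem K N E) (x0 : K) : Prop :=
  ∀ ε : ℝ, 0 < ε → ∃ V : Finset N,
    ∀ n : ℕ, (∑' j : {j : N // j ∉ V}, M.alphaMeas x0 (n + 1) j.val) < ENNReal.ofReal ε

/-- `M` is contractive with contraction rate `a`:
`∑_{e, i(e) = j} p_e(x) d(w_e x, w_e y) ≤ a·d(x, y)` on each `K_j`. -/
def IsContractive (M : MarkovSystem K N E) (a : ℝ) : Prop :=
  ∀ j : N, ∀ x ∈ M.Kset j, ∀ y ∈ M.Kset j,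
    (∑' e : {e : E // M.i e = j},
        ENNReal.ofReal (M.p e.val x * dist (M.w e.val x) (M.w e.val y)))
      ≤ ENNReal.ofReal (a * dist x y)

/-- `L(x) = ∑_j d(x, x_j)·1_{K_j}(x)`. -/
def Lfun (M : MarkovSystem K N E) (xp : N → K) : K → ℝ≥0∞ :=
  fun x => ∑' j : N, Set.indicator (M.Kset j) (fun y => ENNReal.ofReal (dist y (xp j))) x

/-- `b = sup_j sup_{x ∈ K_j} ∑_{e, i(e) = j} p_e(x)·d(w_e(x_{i(e)}), x_{t(e)})`. -/
def bConst (M : MarkovSystem K N E) (xp : N → K) : ℝ≥0∞ :=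
  ⨆ j : N, ⨆ x ∈ M.Kset j,
    ∑' e : {e : E // M.i e = j},
      ENNReal.ofReal (M.p e.val x * dist (M.w e.val (xp (M.i e.val))) (xp (M.t e.val)))

/-- `P^m_x` evaluated on a word: `p_{e_0}(x)·p_{e_1}(w_{e_0}x)·⋯`. -/
def wordProb (M : MarkovSystem K N E) : List (Option E) → K → ℝ
  | [], _ => 1
  | o :: rest, x => M.pext o x * M.wordProb rest (M.wext o x)

/-- `Λ = Φ(μ)`: `Λ` is a shift-invariant Borel probability measure with
`Λ(_m[e_m, …, e_n]) = ∫ P^m_x(_m[e_m, …, e_n]) dμ(x)` for all cylinders with `m ≤ 0`. -/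
def IsPhiOf (M : MarkovSystem K N E) (μ : Measure K) (Λ : Measure (CodeSpace E)) : Prop :=
  IsProbabilityMeasure Λ ∧ Measure.map (shiftMap E) Λ = Λ ∧
    ∀ m : ℤ, m ≤ 0 → ∀ es : List (Option E),
      Λ (cylSetL m es) = ∫⁻ x, ENNReal.ofReal (M.wordProb es x) ∂μ

/-- The (negative of the) energy function: `-u(σ) = -log p_{σ_1}(F(σ))` on `D`
(`+∞` if `p_{σ_1}(F(σ)) = 0`) and `+∞` off `D`, valued in `[0, ∞]`. -/
def negEnergy (M : MarkovSystem K N E) (j0 : N) (xp : N → K) (σ : CodeSpace E) : ℝ≥0∞ :=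
  if σ ∈ M.codeDomain j0 xp then
    (σ 1).elim ⊤ fun e =>
      if M.p e (M.code j0 xp σ) = 0 then ⊤
      else ENNReal.ofReal (-Real.log (M.p e (M.code j0 xp σ)))
  else ⊤

/-- The free energy `h_S(Λ) + ∫ u dΛ`, as an extended real number. -/
def freeEnergy (M : MarkovSystem K N E) (j0 : N) (xp : N → K)
    (Λ : Measure (CodeSpace E)) : EReal :=
  (entropyS Λ : EReal) - ((∫⁻ σ, M.negEnergy j0 xp σ ∂Λ : ℝ≥0∞) : EReal)

/-- `Λ₀ ∈ E(u)`: `Λ₀` is a thermodynamic equilibrium state for the energy function `u`. -/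
def IsEquilibriumForU (M : MarkovSystem K N E) (j0 : N) (xp : N → K)
    (Λ0 : Measure (CodeSpace E)) : Prop :=
  IsProbabilityMeasure Λ0 ∧ Measure.map (shiftMap E) Λ0 = Λ0 ∧ entropyS Λ0 ≠ ⊤ ∧
    M.freeEnergy j0 xp Λ0 =
      sSup {r : EReal | ∃ Λ : Measure (CodeSpace E),
        IsProbabilityMeasure Λ ∧ Measure.map (shiftMap E) Λ = Λ ∧ entropyS Λ ≠ ⊤ ∧
          r = M.freeEnergy j0 xp Λ}

end MarkovSystem

end

/-!
Let `B = ⋃ⱼ (Tⱼ ∩ F⁻¹Kⱼ)` (`Gset₀` below), so that `G = ⋃ₖ S⁻ᵏB`. By uniform continuity of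
`w_{σ₁}`, the shift maps `B ∩ D` into `B`, so for a shift-invariant `Λ` the set `B` is invariant
mod `Λ` and `Λ(G) = Λ(B)`. On `B` the conditional probabilities `(p̄ₑ ∘ F)·1_{T_{i(e)}}` defining
`Ẽ(M)` agree with the `pₑ ∘ F` defining `E(M)`; off `B` they agree with the
`(∂pₑ ∘ F)·1_{T_{i(e)}}` defining `E_⊥(M)`. States of `E(M)` are carried by `B` because
`∑ₑ pₑ = 1`, and states of `E_⊥(M)` by its complement because `∂pₑ` vanishes on `K_{i(e)}`.
Finally `B` agrees on `D` with an `𝓕`-measurable set, so an asymptotic state giving `B` mass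
less than one can be conditioned on the complement of `B`, which produces an element of `E_⊥(M)`.
-/

open ProbabilityTheory

namespace MeasureTheory

section MeasurePreserving

variable {α : Type*} [MeasurableSpace α] {μ : Measure α} {f : α → α} {s : Set α}

theorem MeasurePreserving.preimage_ae_eq_of_ae_le [IsFiniteMeasure μ]
    (hf : MeasurePreserving f μ μ) (hs : NullMeasurableSet s μ) (h : s ≤ᵐ[μ] f ⁻¹' s) :
    f ⁻¹' s =ᵐ[μ] s :=
  (ae_eq_of_ae_subset_of_measure_ge h (hf.measure_preimage hs).le hs (measure_ne_top _ _)).symm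

theorem MeasurePreserving.preimage_iterate_ae_eq (hf : MeasurePreserving f μ μ)
    (h : f ⁻¹' s =ᵐ[μ] s) (k : ℕ) : f^[k] ⁻¹' s =ᵐ[μ] s := by
  induction k with
  | zero => rfl
  | succ k ih =>
    rw [Function.iterate_succ', Set.preimage_comp]
    exact ((hf.iterate k).quasiMeasurePreserving.preimage_ae_eq h).trans ih

theorem MeasurePreserving.measure_iUnion_preimage_iterate [IsFiniteMeasure μ]
    (hf : MeasurePreserving f μ μ) (hs : NullMeasurableSet s μ) (h : s ≤ᵐ[μ] f ⁻¹' s) :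
    μ (⋃ k : ℕ, f^[k] ⁻¹' s) = μ s := by
  calc μ (⋃ k : ℕ, f^[k] ⁻¹' s) = μ (⋃ _ : ℕ, s) :=
        measure_congr (Filter.EventuallyEq.countable_iUnion
          (hf.preimage_iterate_ae_eq (hf.preimage_ae_eq_of_ae_le hs h)))
    _ = μ s := by rw [Set.iUnion_const]

theorem MeasurePreserving.cond (hf : MeasurePreserving f μ μ) (hs : MeasurableSet s)
    (h : f ⁻¹' s =ᵐ[μ] s) : MeasurePreserving f μ[|s] μ[|s] := by
  refine ⟨hf.measurable, ?_⟩
  have hr := (hf.restrict_preimage hs).map_eq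
  rw [Measure.restrict_congr_set h] at hr
  rw [ProbabilityTheory.cond, Measure.map_smul, hr]

end MeasurePreserving

section CondExp

variable {α : Type*} {m m₀ : MeasurableSpace α} {μ : Measure α} {s t : Set α}

theorem condExp_cond_ae_eq [IsFiniteMeasure μ] (hm : m ≤ m₀)
    (hs : MeasurableSet[m] s) {f : α → ℝ} (hf : Integrable f μ) :
    μ[|s][f | m] =ᵐ[μ[|s]] μ[f | m] := by
  rcases eq_or_ne (μ s) 0 with hμs | hμs
  · simp [cond_eq_zero_of_meas_eq_zero hμs, EventuallyEq]
  have hint : ∀ {g : α → ℝ}, Integrable g μ → Integrable g μ[|s] := fun hg =>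
    hg.restrict.smul_measure (ENNReal.inv_ne_top.2 hμs)
  have hrestrict : ∀ {t : Set α} (g : α → ℝ), MeasurableSet[m] t →
      ∫ x in t, g x ∂μ[|s] = (μ s)⁻¹.toReal • ∫ x in t ∩ s, g x ∂μ := fun g ht => by
    rw [ProbabilityTheory.cond, Measure.restrict_smul, integral_smul_measure,
      Measure.restrict_restrict (hm _ ht)]
  refine (ae_eq_condExp_of_forall_setIntegral_eq hm (hint hf)
    (fun t _ _ => (hint integrable_condExp).integrableOn) (fun t ht _ => ?_)
    stronglyMeasurable_condExp.aestronglyMeasurable).symm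
  rw [hrestrict _ ht, hrestrict _ ht, setIntegral_condExp hm hf (ht.inter hs)]

theorem measure_inter_eq_zero_iff_ae_condExp_indicator_eq_zero [IsFiniteMeasure μ]
    (hm : m ≤ m₀) (hs : MeasurableSet[m] s) (ht : MeasurableSet t) :
    μ (s ∩ t) = 0 ↔ ∀ᵐ x ∂μ, x ∈ s → μ[t.indicator (fun _ => (1 : ℝ)) | m] x = 0 := by
  have hint : Integrable (t.indicator fun _ => (1 : ℝ)) μ := (integrable_const 1).indicator ht
  have hcond : ∫ x in s, μ[t.indicator (fun _ => (1 : ℝ)) | m] x ∂μ = μ.real (s ∩ t) := by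
    rw [setIntegral_condExp hm hint hs, integral_indicator ht, setIntegral_const,
      measureReal_restrict_apply ht, Set.inter_comm, smul_eq_mul, mul_one]
  rw [← ae_restrict_iff' (hm _ hs), ← measureReal_eq_zero_iff, ← hcond,
    setIntegral_eq_zero_iff_of_nonneg_ae]
  · rfl
  · exact ae_restrict_of_ae (condExp_nonneg (.of_forall fun x =>
      Set.indicator_nonneg (fun _ _ => zero_le_one) x))
  · exact integrable_condExp.integrableOn

end CondExp

end MeasureTheory

section CodeSpace

variable {E : Type*}

theorem measurable_shiftMap : Measurable (shiftMap E) :=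
  measurable_pi_lambda _ fun k => measurable_pi_apply (k + 1)

theorem measurableSet_coord (k : ℤ) (P : Option E → Prop) :
    MeasurableSet {σ : CodeSpace E | P (σ k)} :=
  measurable_pi_apply k (.of_discrete (s := {o | P o}))

theorem measurableSet_cylSetL (m : ℤ) (es : List (Option E)) : MeasurableSet (cylSetL m es) := by
  simp only [cylSetL, Set.ofPred_forall]
  exact .iInter fun k => .iInter fun _ => measurableSet_coord _ (· = _)

theorem pastAlgebra_le : pastAlgebra E ≤ (inferInstance : MeasurableSpace (CodeSpace E)) :=
  MeasurableSpace.generateFrom_le fun _ ⟨es, _, hA⟩ => hA ▸ measurableSet_cylSetL _ es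

variable [Countable E]

theorem measurable_pastWindow (n : ℕ) :
    Measurable[pastAlgebra E] fun (σ : CodeSpace E) (i : Fin (n + 1)) => σ (i - n) := by
  refine @measurable_to_countable' _ _ _ _ (pastAlgebra E) _ fun v => ?_
  refine MeasurableSpace.measurableSet_generateFrom ⟨List.ofFn v, by simp, ?_⟩
  ext σ
  simp only [Set.mem_preimage, Set.mem_singleton_iff, cylSetL, List.length_ofFn,
    Set.mem_ofPred_eq, List.get_eq_getElem, List.getElem_ofFn, funext_iff, Fin.forall_iff]
  refine forall_congr' fun k => forall_congr' fun _ => ?_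
  push_cast
  ring_nf

theorem measurable_past_of_window_congr {β : Type*} [MeasurableSpace β] {f : CodeSpace E → β}
    (n : ℕ) (hf : ∀ σ τ : CodeSpace E, (∀ k : ℤ, -n ≤ k → k ≤ 0 → σ k = τ k) → f σ = f τ) :
    Measurable[pastAlgebra E] f := by
  let extend : (Fin (n + 1) → Option E) → CodeSpace E := fun v k =>
    if h : -n ≤ k ∧ k ≤ 0 then v ⟨(k + n).toNat, by omega⟩ else none
  have hfactor : f = (f ∘ extend) ∘ fun σ i => σ (i - n) := by
    funext σ
    refine hf σ _ fun k hk₁ hk₂ => ?_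
    simp only [extend, dif_pos (And.intro hk₁ hk₂)]
    congr 1
    omega
  rw [hfactor]
  exact (measurable_of_countable _).comp (measurable_pastWindow n)

theorem measurableSet_coord_past {k : ℤ} (hk : k ≤ 0) (P : Option E → Prop) :
    MeasurableSet[pastAlgebra E] {σ : CodeSpace E | P (σ k)} :=
  measurable_past_of_window_congr (f := fun σ : CodeSpace E => σ k) (-k).toNat
    (fun σ τ h => h k (by omega) hk) (.of_discrete (s := {o | P o}))

end CodeSpace

namespace MarkovSystem

variable {K : Type*} [MetricSpace K] [MeasurableSpace K] {N E : Type*}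
  (M : MarkovSystem K N E) (j0 : N) (xp : N → K)

theorem iterW_congr {σ τ : CodeSpace E} (n : ℕ)
    (h : ∀ k : ℤ, -n ≤ k → k ≤ 0 → σ k = τ k) (y : K) : M.iterW σ n y = M.iterW τ n y := by
  induction n generalizing y with
  | zero => simp only [iterW, h 0 le_rfl le_rfl]
  | succ n ih =>
    simp only [iterW, h (-(n + 1 : ℤ)) (by push_cast; omega) (by omega)]
    exact ih (fun k hk₁ hk₂ => h k (by push_cast; omega) hk₂) _

theorem orbit_congr {σ τ : CodeSpace E} (n : ℕ) (h : ∀ k : ℤ, -n ≤ k → k ≤ 0 → σ k = τ k) :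
    M.orbit j0 xp σ n = M.orbit j0 xp τ n := by
  rw [orbit, orbit, h (-n) le_rfl (by omega), M.iterW_congr n h]

theorem exists_eq_some_of_mem_pathSpace {σ : CodeSpace E} (hσ : σ ∈ M.pathSpace) (n : ℤ) :
    ∃ e : E, σ n = some e :=
  let ⟨e, _, he, _⟩ := hσ n
  ⟨e, he⟩

theorem iterW_mem {σ : CodeSpace E} (hσ : σ ∈ M.pathSpace) {e₀ : E} (h₀ : σ 0 = some e₀)
    (n : ℕ) {e : E} (he : σ (-n) = some e) {y : K} (hy : y ∈ M.Kset (M.i e)) :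
    M.iterW σ n y ∈ M.Kset (M.t e₀) := by
  induction n generalizing e y with
  | zero =>
    obtain rfl : e₀ = e := Option.some_injective _ (by simpa [h₀] using he)
    simpa [iterW, wext, h₀] using M.w_mapsTo e₀ hy
  | succ n ih =>
    obtain ⟨e', e'', he', he'', hpath⟩ := hσ (-(n + 1 : ℤ))
    obtain rfl : e' = e := Option.some_injective _ (by rw [← he', ← he]; push_cast; rfl)
    rw [iterW, he']
    refine ih (by simpa using he'') ?_
    rw [hpath]
    exact M.w_mapsTo e' hy

theorem orbit_mem (hxp : ∀ j, xp j ∈ M.Kset j) {σ : CodeSpace E} (hσ : σ ∈ M.pathSpace)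
    {e₀ : E} (h₀ : σ 0 = some e₀) (n : ℕ) : M.orbit j0 xp σ n ∈ M.Kset (M.t e₀) := by
  obtain ⟨e, he⟩ := M.exists_eq_some_of_mem_pathSpace hσ (-n)
  exact M.iterW_mem hσ h₀ n he (by simpa [iext, he] using hxp (M.i e))

theorem iterW_shiftMap (σ : CodeSpace E) (n : ℕ) (y : K) :
    M.iterW (shiftMap E σ) (n + 1) y = M.wext (σ 1) (M.iterW σ n y) := by
  induction n generalizing y with
  | zero => norm_num [iterW, shiftMap]
  | succ n ih =>
    rw [iterW, ih, iterW, shiftMap]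
    congr 5

theorem orbit_shiftMap (σ : CodeSpace E) (n : ℕ) :
    M.orbit j0 xp (shiftMap E σ) (n + 1) = M.wext (σ 1) (M.orbit j0 xp σ n) := by
  rw [orbit, orbit, ← iterW_shiftMap]
  norm_num [shiftMap]

theorem shiftMap_mem_pathSpace {σ : CodeSpace E} (hσ : σ ∈ M.pathSpace) :
    shiftMap E σ ∈ M.pathSpace :=
  fun n => hσ (n + 1)

def convergenceSet : Set (CodeSpace E) :=
  {σ | ∃ l : K, Tendsto (fun n : ℕ => M.orbit j0 xp σ n) atTop (𝓝 l)}

/-- `code` is not `𝓕`-measurable, because `codeDomain` also constrains the future coordinates;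
`pastCode` agrees with it on `codeDomain` and is `𝓕`-measurable. -/
noncomputable def pastCode (σ : CodeSpace E) : K :=
  if h : σ ∈ M.convergenceSet j0 xp then h.choose else xp j0

theorem tendsto_orbit_pastCode {σ : CodeSpace E} (h : σ ∈ M.convergenceSet j0 xp) :
    Tendsto (fun n => M.orbit j0 xp σ n) atTop (𝓝 (M.pastCode j0 xp σ)) := by
  rw [pastCode, dif_pos h]
  exact h.choose_spec

theorem tendsto_orbit_code {σ : CodeSpace E} (h : σ ∈ M.codeDomain j0 xp) :
    Tendsto (fun n => M.orbit j0 xp σ n) atTop (𝓝 (M.code j0 xp σ)) := by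
  rw [code, dif_pos h]
  exact h.2.choose_spec

theorem code_eq_pastCode {σ : CodeSpace E} (h : σ ∈ M.codeDomain j0 xp) :
    M.code j0 xp σ = M.pastCode j0 xp σ :=
  tendsto_nhds_unique (M.tendsto_orbit_code j0 xp h) (M.tendsto_orbit_pastCode j0 xp h.2)

theorem code_mem_closure (hxp : ∀ j, xp j ∈ M.Kset j) {σ : CodeSpace E}
    (hσ : σ ∈ M.codeDomain j0 xp) {e₀ : E} (h₀ : σ 0 = some e₀) :
    M.code j0 xp σ ∈ closure (M.Kset (M.t e₀)) :=
  mem_closure_of_tendsto (M.tendsto_orbit_code j0 xp hσ)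
    (.of_forall (M.orbit_mem j0 xp hxp hσ.1 h₀))

def Gset₀ : Set (CodeSpace E) := ⋃ j : N, M.Tset j ∩ M.code j0 xp ⁻¹' M.Kset j

theorem mem_Gset₀ {σ : CodeSpace E} : σ ∈ M.Gset₀ j0 xp ↔
    σ ∈ M.pathSpace ∧ ∃ e : E, σ 0 = some e ∧ M.code j0 xp σ ∈ M.Kset (M.t e) := by
  simp only [Gset₀, Tset, Set.mem_iUnion, Set.mem_inter_iff, Set.mem_preimage, Set.mem_ofPred_eq]
  constructor
  · rintro ⟨_, ⟨hσ, e, he, rfl⟩, hK⟩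
    exact ⟨hσ, e, he, hK⟩
  · rintro ⟨hσ, e, he, hK⟩
    exact ⟨_, ⟨hσ, e, he, rfl⟩, hK⟩

theorem Gset_eq_iUnion : M.Gset j0 xp = ⋃ k : ℕ, (shiftMap E)^[k] ⁻¹' M.Gset₀ j0 xp := by
  simp only [Gset, Gset₀, Set.preimage_iUnion, Set.inter_comm]

theorem shiftMap_mem_codeDomain_inter_Gset₀ (hxp : ∀ j, xp j ∈ M.Kset j)
    (huc : M.IsUniformlyContinuous) {σ : CodeSpace E} (hD : σ ∈ M.codeDomain j0 xp)
    (hB : σ ∈ M.Gset₀ j0 xp) :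
    shiftMap E σ ∈ M.codeDomain j0 xp ∩ M.Gset₀ j0 xp := by
  obtain ⟨hσ, e₀, h₀, hK⟩ := (M.mem_Gset₀ j0 xp).1 hB
  obtain ⟨e₀', e₁, h₀', h₁, hpath⟩ := hσ 0
  obtain rfl : e₀' = e₀ := Option.some_injective _ (h₀'.symm.trans h₀)
  rw [zero_add] at h₁
  rw [← hpath] at hK
  have hw : Tendsto (fun n => M.w e₁ (M.orbit j0 xp σ n)) atTop (𝓝 (M.w e₁ (M.code j0 xp σ))) :=
    ((huc e₁).1.continuousOn.continuousWithinAt hK).tendsto.comp <| tendsto_nhdsWithin_iff.2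
      ⟨M.tendsto_orbit_code j0 xp hD, .of_forall fun n => hpath ▸ M.orbit_mem j0 xp hxp hσ h₀ n⟩
  have hshift : Tendsto (fun n => M.orbit j0 xp (shiftMap E σ) n) atTop
      (𝓝 (M.w e₁ (M.code j0 xp σ))) := by
    rw [← tendsto_add_atTop_iff_nat 1]
    simpa only [M.orbit_shiftMap, h₁, wext, Option.elim] using hw
  have hDs : shiftMap E σ ∈ M.codeDomain j0 xp := ⟨M.shiftMap_mem_pathSpace hσ, _, hshift⟩
  refine ⟨hDs, (M.mem_Gset₀ j0 xp).2 ⟨hDs.1, e₁, h₁, ?_⟩⟩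
  rw [tendsto_nhds_unique (M.tendsto_orbit_code j0 xp hDs) hshift]
  exact M.w_mapsTo e₁ hK

theorem Gset₀_ae_le_preimage_shiftMap {Λ : Measure (CodeSpace E)} (hxp : ∀ j, xp j ∈ M.Kset j)
    (huc : M.IsUniformlyContinuous) (hD : ∀ᵐ σ ∂Λ, σ ∈ M.codeDomain j0 xp) :
    M.Gset₀ j0 xp ≤ᵐ[Λ] shiftMap E ⁻¹' M.Gset₀ j0 xp :=
  hD.mono fun _ hσ hB => (M.shiftMap_mem_codeDomain_inter_Gset₀ j0 xp hxp huc hσ hB).2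

def pastGset₀ : Set (CodeSpace E) :=
  {σ | ∃ e : E, σ 0 = some e ∧ M.pastCode j0 xp σ ∈ M.Kset (M.t e)}

theorem mem_Gset₀_iff_mem_pastGset₀ {σ : CodeSpace E} (hσ : σ ∈ M.codeDomain j0 xp) :
    σ ∈ M.Gset₀ j0 xp ↔ σ ∈ M.pastGset₀ j0 xp := by
  simp only [mem_Gset₀, pastGset₀, Set.mem_ofPred_eq, hσ.1, true_and,
    M.code_eq_pastCode j0 xp hσ]

theorem Gset₀_ae_eq_pastGset₀ {Λ : Measure (CodeSpace E)} (hD : ∀ᵐ σ ∂Λ, σ ∈ M.codeDomain j0 xp) :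
    M.Gset₀ j0 xp =ᵐ[Λ] M.pastGset₀ j0 xp :=
  eventuallyEq_set.2 (hD.mono fun _ => M.mem_Gset₀_iff_mem_pastGset₀ j0 xp)

theorem indicator_pbar_code_eq_p_code (pbar : E → K → ℝ) (hpbar : M.IsUCExtensionP pbar)
    {σ : CodeSpace E} (hσ : σ ∈ M.Gset₀ j0 xp) (e : E) :
    (M.Tset (M.i e)).indicator (fun σ => pbar e (M.code j0 xp σ)) σ = M.p e (M.code j0 xp σ) := by
  obtain ⟨hpath, e₀, h₀, hK⟩ := (M.mem_Gset₀ j0 xp).1 hσ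
  by_cases he : M.t e₀ = M.i e
  · have hT : σ ∈ M.Tset (M.i e) := ⟨hpath, e₀, h₀, he⟩
    rw [Set.indicator_of_mem hT, (hpbar e).2.1 _ (he ▸ hK)]
  · have hT : σ ∉ M.Tset (M.i e) := by
      rintro ⟨-, e', h', he'⟩
      exact he (Option.some_injective _ (h₀.symm.trans h') ▸ he')
    rw [Set.indicator_of_notMem hT,
      M.p_zero_outside e _ fun hK' => (M.Kset_disjoint he).notMem_of_mem_left hK hK']

theorem indicator_dp_code_eq_zero (pbar : E → K → ℝ) {σ : CodeSpace E}
    (hσ : σ ∈ M.Gset₀ j0 xp) (e : E) :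
    (M.Tset (M.i e)).indicator (fun σ => M.dp pbar e (M.code j0 xp σ)) σ = 0 := by
  obtain ⟨-, e₀, h₀, hK⟩ := (M.mem_Gset₀ j0 xp).1 hσ
  refine Set.indicator_apply_eq_zero.2 fun ⟨_, e', h', he'⟩ => ?_
  obtain rfl : e' = e₀ := Option.some_injective _ (h'.symm.trans h₀)
  unfold dp
  exact Set.indicator_of_notMem (fun h => h.2 (he' ▸ hK)) _

theorem indicator_pbar_code_eq_indicator_dp_code (hxp : ∀ j, xp j ∈ M.Kset j)
    (pbar : E → K → ℝ) {σ : CodeSpace E} (hD : σ ∈ M.codeDomain j0 xp)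
    (hσ : σ ∉ M.Gset₀ j0 xp) (e : E) :
    (M.Tset (M.i e)).indicator (fun σ => pbar e (M.code j0 xp σ)) σ =
      (M.Tset (M.i e)).indicator (fun σ => M.dp pbar e (M.code j0 xp σ)) σ := by
  by_cases hT : σ ∈ M.Tset (M.i e)
  · rw [Set.indicator_of_mem hT, Set.indicator_of_mem hT, dp, Set.indicator_of_mem]
    obtain ⟨hpath, e₀, h₀, he⟩ := hT
    have hK : M.code j0 xp σ ∉ M.Kset (M.t e₀) := fun hK =>
      hσ ((M.mem_Gset₀ j0 xp).2 ⟨hpath, e₀, h₀, hK⟩)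
    exact he ▸ ⟨M.code_mem_closure j0 xp hxp hD h₀, hK⟩
  · rw [Set.indicator_of_notMem hT, Set.indicator_of_notMem hT]

theorem mem_Gset₀_of_forall_p_code_eq_zero {σ : CodeSpace E} (hσ : σ ∈ M.pathSpace)
    (h : ∀ e : E, (∀ e' : E, σ 0 = some e' → M.t e' ≠ M.i e) → M.p e (M.code j0 xp σ) = 0) :
    σ ∈ M.Gset₀ j0 xp := by
  obtain ⟨e₀, h₀⟩ := M.exists_eq_some_of_mem_pathSpace hσ 0
  obtain ⟨j, hj⟩ := Set.mem_iUnion.1 (M.Kset_cover.symm ▸ Set.mem_univ (M.code j0 xp σ))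
  obtain ⟨⟨e, rfl⟩, he⟩ : ∃ e : {e : E // M.i e = j}, M.p e (M.code j0 xp σ) ≠ 0 := by
    by_contra! h0
    simpa [h0] using M.p_tsum_one j _ hj
  have ht : M.t e₀ = M.i e := by
    by_contra ht
    exact he (h e fun e' h' => Option.some_injective _ (h₀.symm.trans h') ▸ ht)
  exact (M.mem_Gset₀ j0 xp).2 ⟨hσ, e₀, h₀, ht ▸ hj⟩

variable [Countable E]

theorem measurable_orbit_past (n : ℕ) :
    Measurable[pastAlgebra E] fun σ => M.orbit j0 xp σ n :=
  measurable_past_of_window_congr n fun _ _ => M.orbit_congr j0 xp n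

theorem measurableSet_convergenceSet_past [CompleteSpace K] :
    MeasurableSet[pastAlgebra E] (M.convergenceSet j0 xp) := by
  have h : M.convergenceSet j0 xp = ⋂ k : ℕ, ⋃ n₀ : ℕ, ⋂ a ≥ n₀, ⋂ b ≥ n₀,
      {σ | dist (M.orbit j0 xp σ a) (M.orbit j0 xp σ b) < 1 / (k + 1)} := by
    ext σ
    rw [convergenceSet, Set.mem_ofPred_eq, ← cauchy_map_iff_exists_tendsto]
    exact Metric.uniformity_basis_dist_inv_nat_succ.cauchySeq_iff.trans (by simp)
  rw [h]
  refine .iInter fun k => .iUnion fun n₀ => .iInter fun a => .iInter fun _ => .iInter fun b =>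
    .iInter fun _ => measurableSet_lt ?_ measurable_const
  exact measurable_past_of_window_congr (max a b) fun σ τ h => by
    rw [M.orbit_congr j0 xp a fun k hk => h k (by omega),
      M.orbit_congr j0 xp b fun k hk => h k (by omega)]

theorem measurable_pastCode [CompleteSpace K] [BorelSpace K] :
    Measurable[pastAlgebra E] (M.pastCode j0 xp) := by
  let _ := pastAlgebra E
  refine measurable_of_tendsto_metrizable' atTop
    (f := fun n σ => if σ ∈ M.convergenceSet j0 xp then M.orbit j0 xp σ n else xp j0)
    (fun n => Measurable.ite (M.measurableSet_convergenceSet_past j0 xp)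
      (M.measurable_orbit_past j0 xp n) measurable_const) (tendsto_pi_nhds.2 fun σ => ?_)
  by_cases h : σ ∈ M.convergenceSet j0 xp
  · simpa [h] using M.tendsto_orbit_pastCode j0 xp h
  · simp [pastCode, h]

theorem measurableSet_pathSpace : MeasurableSet M.pathSpace := by
  rw [pathSpace, Set.ofPred_forall]
  refine .iInter fun n => ?_
  have hpair : Measurable fun σ : CodeSpace E => (σ n, σ (n + 1)) :=
    (measurable_pi_apply n).prodMk (measurable_pi_apply (n + 1))
  exact hpair (.of_discrete (s := {q : Option E × Option E |
      ∃ e e' : E, q.1 = some e ∧ q.2 = some e' ∧ M.i e' = M.t e}))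

theorem measurableSet_codeDomain [CompleteSpace K] : MeasurableSet (M.codeDomain j0 xp) :=
  M.measurableSet_pathSpace.inter (pastAlgebra_le _ (M.measurableSet_convergenceSet_past j0 xp))

theorem measurable_code [CompleteSpace K] [BorelSpace K] : Measurable (M.code j0 xp) := by
  have h : M.code j0 xp = (M.codeDomain j0 xp).piecewise (M.pastCode j0 xp)
      fun σ => xp (M.text j0 (σ 0)) := by
    funext σ
    by_cases hσ : σ ∈ M.codeDomain j0 xp
    · rw [Set.piecewise_eq_of_mem _ _ _ hσ, M.code_eq_pastCode j0 xp hσ]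
    · rw [Set.piecewise_eq_of_notMem _ _ _ hσ, code, dif_neg hσ]
  rw [h]
  exact ((M.measurable_pastCode j0 xp).mono pastAlgebra_le le_rfl).piecewise
    (M.measurableSet_codeDomain j0 xp)
    ((measurable_of_countable fun o => xp (M.text j0 o)).comp (measurable_pi_apply 0))

theorem measurableSet_Tset (j : N) : MeasurableSet (M.Tset j) :=
  M.measurableSet_pathSpace.inter
    (pastAlgebra_le _ (measurableSet_coord_past le_rfl fun o => ∃ e, o = some e ∧ M.t e = j))

theorem measurableSet_Gset₀ [CompleteSpace K] [BorelSpace K] [Countable N] :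
    MeasurableSet (M.Gset₀ j0 xp) :=
  .iUnion fun j => (M.measurableSet_Tset j).inter (M.measurable_code j0 xp (M.Kset_measurable j))

theorem measurableSet_pastGset₀_past [CompleteSpace K] [BorelSpace K] :
    MeasurableSet[pastAlgebra E] (M.pastGset₀ j0 xp) := by
  have h : M.pastGset₀ j0 xp =
      ⋃ e : E, {σ | σ 0 = some e} ∩ M.pastCode j0 xp ⁻¹' M.Kset (M.t e) := by
    ext σ
    simp [pastGset₀]
  rw [h]
  exact .iUnion fun e => (measurableSet_coord_past le_rfl (· = some e)).inter
    (M.measurable_pastCode j0 xp (M.Kset_measurable _))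

theorem ae_mem_codeDomain [CompleteSpace K] {Λ : Measure (CodeSpace E)} [IsProbabilityMeasure Λ]
    (hD : Λ (M.codeDomain j0 xp) = 1) :
    ∀ᵐ σ ∂Λ, σ ∈ M.codeDomain j0 xp :=
  (mem_ae_iff_prob_eq_one (M.measurableSet_codeDomain j0 xp)).2 hD

end MarkovSystem

namespace MarkovSystem

variable {K : Type*} [MetricSpace K] [CompleteSpace K] [MeasurableSpace K] {N E : Type*}
  [Countable E] {M : MarkovSystem K N E} {j0 : N} {xp : N → K} {pbar : E → K → ℝ}
  {Λ : Measure (CodeSpace E)}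

theorem isAsymptotic_iff_isPerp (hxp : ∀ j, xp j ∈ M.Kset j) (hB : Λ (M.Gset₀ j0 xp) = 0) :
    M.IsAsymptotic j0 xp pbar Λ ↔ M.IsPerp j0 xp pbar Λ := by
  refine and_congr_right fun hP => and_congr_right fun _ => and_congr_right fun hD =>
    forall_congr' fun e => EventuallyEq.congr_right ?_
  exact ((M.ae_mem_codeDomain j0 xp hD).and (measure_eq_zero_iff_ae_notMem.1 hB)).mono
    fun _ hσ => M.indicator_pbar_code_eq_indicator_dp_code j0 xp hxp pbar hσ.1 hσ.2 e

theorem IsAsymptotic.cond (hΛ : M.IsAsymptotic j0 xp pbar Λ) {W : Set (CodeSpace E)}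
    (hW : MeasurableSet[pastAlgebra E] W) (hWS : shiftMap E ⁻¹' W =ᵐ[Λ] W) (hW0 : Λ W ≠ 0) :
    M.IsAsymptotic j0 xp pbar Λ[|W] := by
  obtain ⟨hP, hS, hD, hcond⟩ := hΛ
  have hac : Λ[|W] ≪ Λ := cond_absolutelyContinuous
  have hP' := cond_isProbabilityMeasure (μ := Λ) hW0
  have hS' := (MeasurePreserving.mk measurable_shiftMap hS).cond (pastAlgebra_le _ hW) hWS
  refine ⟨hP', hS'.map_eq, (mem_ae_iff_prob_eq_one (M.measurableSet_codeDomain j0 xp)).1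
      (hac.ae_le (M.ae_mem_codeDomain j0 xp hD)), fun e => ?_⟩
  exact (condExp_cond_ae_eq pastAlgebra_le hW
    ((integrable_const 1).indicator (measurableSet_coord 1 (· = some e)))).trans
    (hac.ae_le (hcond e))

variable [BorelSpace K]

theorem IsPerp.measure_Gset₀_eq_zero (hΛ : M.IsPerp j0 xp pbar Λ) : Λ (M.Gset₀ j0 xp) = 0 := by
  obtain ⟨hP, -, hD, hcond⟩ := hΛ
  have hB := M.Gset₀_ae_eq_pastGset₀ j0 xp (M.ae_mem_codeDomain j0 xp hD)
  have hnull : ∀ e : E, Λ (M.pastGset₀ j0 xp ∩ {σ | σ 1 = some e}) = 0 := fun e =>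
    (measure_inter_eq_zero_iff_ae_condExp_indicator_eq_zero pastAlgebra_le
      (M.measurableSet_pastGset₀_past j0 xp) (measurableSet_coord 1 (· = some e))).2 <|
      ((hcond e).and (eventuallyEq_set.1 hB)).mono fun _ ⟨hσc, hσB⟩ hσ =>
        hσc.trans (M.indicator_dp_code_eq_zero j0 xp pbar (hσB.2 hσ) e)
  refine measure_mono_null (fun σ hσ => ?_) (measure_iUnion_null fun e =>
    (measure_congr (ae_eq_set_inter hB (ae_eq_refl _))).trans (hnull e))
  obtain ⟨e, he⟩ := M.exists_eq_some_of_mem_pathSpace ((M.mem_Gset₀ j0 xp).1 hσ).1 1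
  exact Set.mem_iUnion.2 ⟨e, hσ, he⟩

variable [Countable N]

theorem IsAsymptotic.measure_Gset (hΛ : M.IsAsymptotic j0 xp pbar Λ)
    (hxp : ∀ j, xp j ∈ M.Kset j) (huc : M.IsUniformlyContinuous) :
    Λ (M.Gset j0 xp) = Λ (M.Gset₀ j0 xp) := by
  obtain ⟨hP, hS, hD, -⟩ := hΛ
  rw [Gset_eq_iUnion]
  exact MeasurePreserving.measure_iUnion_preimage_iterate ⟨measurable_shiftMap, hS⟩
    (M.measurableSet_Gset₀ j0 xp).nullMeasurableSet
    (M.Gset₀_ae_le_preimage_shiftMap j0 xp hxp huc (M.ae_mem_codeDomain j0 xp hD))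

theorem isAsymptotic_iff_isEquilibrium (hpbar : M.IsUCExtensionP pbar)
    (hB : Λ (M.Gset₀ j0 xp) = 1) :
    M.IsAsymptotic j0 xp pbar Λ ↔ M.IsEquilibrium j0 xp Λ := by
  refine and_congr_right fun hP => and_congr_right fun _ => and_congr_right fun _ =>
    forall_congr' fun e => EventuallyEq.congr_right ?_
  have hB' : ∀ᵐ σ ∂Λ, σ ∈ M.Gset₀ j0 xp :=
    (mem_ae_iff_prob_eq_one (M.measurableSet_Gset₀ j0 xp)).2 hB
  exact hB'.mono fun _ hσ => M.indicator_pbar_code_eq_p_code j0 xp pbar hpbar hσ e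

theorem IsEquilibrium.measure_Gset₀_eq_one (hΛ : M.IsEquilibrium j0 xp Λ) :
    Λ (M.Gset₀ j0 xp) = 1 := by
  obtain ⟨hP, -, hD, hcond⟩ := hΛ
  have hD := M.ae_mem_codeDomain j0 xp hD
  have hzero : ∀ e : E, ∀ᵐ σ ∂Λ,
      (∀ e', σ 0 = some e' → M.t e' ≠ M.i e) → M.p e (M.code j0 xp σ) = 0 := fun e => by
    have hnull : Λ ({σ | ∀ e', σ 0 = some e' → M.t e' ≠ M.i e} ∩ {σ | σ 1 = some e}) = 0 :=
      measure_eq_zero_iff_ae_notMem.2 <| hD.mono fun σ hσ ⟨hs, h₁⟩ => by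
        obtain ⟨e', e'', h₀, h₁', hpath⟩ := hσ.1 0
        obtain rfl : e'' = e := Option.some_injective _ (h₁'.symm.trans h₁)
        exact hs e' h₀ hpath.symm
    filter_upwards [(measure_inter_eq_zero_iff_ae_condExp_indicator_eq_zero pastAlgebra_le
      (measurableSet_coord_past le_rfl fun o => ∀ e', o = some e' → M.t e' ≠ M.i e)
      (measurableSet_coord 1 (· = some e))).1 hnull,
      hcond e] with σ h hc hs
    exact hc ▸ h hs
  refine (mem_ae_iff_prob_eq_one (M.measurableSet_Gset₀ j0 xp)).1 ?_
  exact (hD.and (ae_all_iff.2 hzero)).mono fun σ h =>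
    M.mem_Gset₀_of_forall_p_code_eq_zero j0 xp h.1.1 h.2

theorem IsAsymptotic.measure_Gset₀_eq_one (hxp : ∀ j, xp j ∈ M.Kset j)
    (huc : M.IsUniformlyContinuous) (hperp : ∀ Λ', ¬M.IsPerp j0 xp pbar Λ')
    (hΛ : M.IsAsymptotic j0 xp pbar Λ) : Λ (M.Gset₀ j0 xp) = 1 := by
  have := hΛ.1
  have hD := M.ae_mem_codeDomain j0 xp hΛ.2.2.1
  have hB := M.Gset₀_ae_eq_pastGset₀ j0 xp hD
  have hW : MeasurableSet[pastAlgebra E] (M.pastGset₀ j0 xp)ᶜ :=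
    (M.measurableSet_pastGset₀_past j0 xp).compl
  have hS : MeasurePreserving (shiftMap E) Λ Λ := ⟨measurable_shiftMap, hΛ.2.1⟩
  have hWS : shiftMap E ⁻¹' (M.pastGset₀ j0 xp)ᶜ =ᵐ[Λ] (M.pastGset₀ j0 xp)ᶜ := by
    rw [Set.preimage_compl]
    exact ((hS.quasiMeasurePreserving.preimage_ae_eq hB.symm).trans
      ((hS.preimage_ae_eq_of_ae_le (M.measurableSet_Gset₀ j0 xp).nullMeasurableSet
        (M.Gset₀_ae_le_preimage_shiftMap j0 xp hxp huc hD)).trans hB)).compl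
  -- Otherwise conditioning on the shift-invariant past event `σ ∉ Gset₀` gives a state of `E_⊥(M)`.
  by_contra hne
  have hW0 : Λ (M.pastGset₀ j0 xp)ᶜ ≠ 0 := by
    rwa [← measure_congr hB.compl, Ne, prob_compl_eq_zero_iff (M.measurableSet_Gset₀ j0 xp)]
  have hΛ'0 : Λ[|(M.pastGset₀ j0 xp)ᶜ] (M.Gset₀ j0 xp) = 0 := by
    refine measure_eq_zero_iff_ae_notMem.2 ?_
    filter_upwards [ae_cond_mem (pastAlgebra_le _ hW),
      cond_absolutelyContinuous.ae_le (eventuallyEq_set.1 hB)] with σ hσW hσB hσ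
    exact hσW (hσB.1 hσ)
  exact hperp _ ((isAsymptotic_iff_isPerp hxp hΛ'0).1 (hΛ.cond hW hWS hW0))

end MarkovSystem

variable {K : Type*} [MetricSpace K] [CompleteSpace K] [MeasurableSpace K] [BorelSpace K]
  {N E : Type*} [Countable N] [Countable E]

/-- For a uniformly continuous Markov system the following are equivalent:
(i) `M` is non-degenerate; (ii) `M(G) > 0` for all `M ∈ Ẽ(M)`; (iii) `E_⊥(M) = ∅`;
(iv) `Ẽ(M) = E(M)`; (v) `M(G) = 1` for all `M ∈ Ẽ(M)`. -/
theorem nondegeneracy_tfae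
    (M : MarkovSystem K N E) (j0 : N) (xp : N → K) (hxp : ∀ j, xp j ∈ M.Kset j)
    (huc : M.IsUniformlyContinuous)
    (pbar : E → K → ℝ) (hpbar : M.IsUCExtensionP pbar) :
    List.TFAE [
      M.IsNonDegenerate j0 xp pbar,
      ∀ Λ : Measure (CodeSpace E), M.IsAsymptotic j0 xp pbar Λ → 0 < Λ (M.Gset j0 xp),
      ∀ Λ : Measure (CodeSpace E), ¬ M.IsPerp j0 xp pbar Λ,
      (∀ Λ : Measure (CodeSpace E), M.IsAsymptotic j0 xp pbar Λ ↔ M.IsEquilibrium j0 xp Λ),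
      ∀ Λ : Measure (CodeSpace E), M.IsAsymptotic j0 xp pbar Λ → Λ (M.Gset j0 xp) = 1] := by
  have hG {Λ} (hΛ : M.IsAsymptotic j0 xp pbar Λ) : Λ (M.Gset j0 xp) = Λ (M.Gset₀ j0 xp) :=
    hΛ.measure_Gset hxp huc
  tfae_have 1 ↔ 2 := forall₂_congr fun Λ hΛ => by
    simp only [hG hΛ, MarkovSystem.Gset₀, pos_iff_ne_zero, Ne, measure_iUnion_null_iff, not_forall]
  tfae_have 2 → 3 := fun h Λ hΛ => by
    have h0 := hΛ.measure_Gset₀_eq_zero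
    have hΛ' := (MarkovSystem.isAsymptotic_iff_isPerp hxp h0).2 hΛ
    simpa [hG hΛ', h0] using h Λ hΛ'
  tfae_have 3 → 5 := fun h Λ hΛ => (hG hΛ).trans (hΛ.measure_Gset₀_eq_one hxp huc h)
  tfae_have 5 → 4 := fun h Λ =>
    ⟨fun hΛ => (MarkovSystem.isAsymptotic_iff_isEquilibrium hpbar
        ((hG hΛ).symm.trans (h Λ hΛ))).1 hΛ,
      fun hΛ => (MarkovSystem.isAsymptotic_iff_isEquilibrium hpbar hΛ.measure_Gset₀_eq_one).2 hΛ⟩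
  tfae_have 4 → 2 := fun h Λ hΛ => by
    rw [hG hΛ, ((h Λ).1 hΛ).measure_Gset₀_eq_one]
    exact one_pos
  tfae_finish
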